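/- arXiv:2212.14646 — 7 statements merged into one kernel-verified Lean document; each statement's English description precedes it below -/
import Mathlib

section
/- Let q ≥ 2 and let a be coprime to q with 1 ≤ a < q, and write a/q = [0; c_1, …, c_s] as a regular continued fraction. If every solution (x, y) of the congruence a·x ≡ y (mod q) with 1 ≤ x < q and 1 ≤ |y| < q satisfies x·|y| ≥ q/M, then every partial quotient satisfies c_j ≤ M. -/
/-- The value of the finite regular continued fraction `[0; c₁, …, c_s]`. -/
def cfVal : List ℕ → ℚ
  | [] => 0
  | c :: rest => 1 / (c + cfVal rest)

/-- `c` is the regular continued fraction expansion of `a/q`: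
nonempty, positive partial quotients, last quotient at least `2`, value `a/q`. -/
def IsCF (a q : ℕ) (c : List ℕ) : Prop :=
  c ≠ [] ∧ (∀ x ∈ c, 1 ≤ x) ∧ 2 ≤ c.getLast! ∧ cfVal c = (a : ℚ) / q

/-
Write α = a/q = 1/(c₁ + t) with t = [0; c₂, …, c_s]. If P/x approximates t with error
δ = x t - P, then x/(c₁ x + P) approximates α with error -α δ; starting from 0/1 at the level
of c_j and lifting back up to α, one finds for each c_j integers X ≥ 1, P with
c_j · X · |X α - P| ≤ 1 (X is the convergent denominator q_{j-1}). Then Y = a X - q P is a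
nonzero solution of a X ≡ Y (mod q) with c_j · X · |Y| ≤ q, so q / M ≤ X |Y| ≤ q / c_j.
-/

lemma cfVal_nonneg : ∀ l : List ℕ, 0 ≤ cfVal l
  | [] => le_rfl
  | c :: l => by
    have := cfVal_nonneg l
    rw [cfVal]
    positivity

/-- Negative errors `δ = X α - P` carry the stronger bound `k |δ| (X + |δ|) ≤ 1` because
`IsGoodApprox.lift` flips the sign of the error and turns `X |δ|` into `X |δ| + α δ²`
when `δ < 0`. -/
def IsGoodApprox (k : ℕ) (α : ℚ) (X P : ℤ) : Prop :=
  1 ≤ X ∧ 0 ≤ P ∧ X * α - P ≠ 0 ∧ k * X * |X * α - P| ≤ 1 ∧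
    (X * α - P < 0 → k * |X * α - P| * (X + |X * α - P|) ≤ 1)

lemma isGoodApprox_one_zero {c : ℕ} {t α : ℚ} (hc : 1 ≤ c) (ht : 0 ≤ t)
    (hα : α * (c + t) = 1) : IsGoodApprox c α 1 0 := by
  have hα0 : 0 < α := pos_of_mul_pos_left (hα ▸ one_pos) (by positivity)
  refine ⟨le_rfl, le_rfl, by simpa using hα0.ne', ?_, fun h => by simp at h; linarith⟩
  simp only [Int.cast_one, Int.cast_zero, mul_one, one_mul, sub_zero, abs_of_pos hα0]
  nlinarith

lemma IsGoodApprox.lift {k c : ℕ} {t α : ℚ} {x P : ℤ} (h : IsGoodApprox k t x P) (hc : 1 ≤ c)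
    (ht : 0 ≤ t) (hα : α * (c + t) = 1) : IsGoodApprox k α (c * x + P) x := by
  obtain ⟨hx, hP, hδ, hbound, hbelow⟩ := h
  set δ := x * t - P
  set X : ℤ := c * x + P
  have hα0 : 0 < α := pos_of_mul_pos_left (hα ▸ one_pos) (by positivity)
  have hα1 : α ≤ 1 := by
    have : (1 : ℚ) ≤ c := by exact_mod_cast hc
    nlinarith
  have hXα : X * α = x - α * δ := by push_cast [X, δ]; linear_combination (x : ℚ) * hα
  have hδ' : X * α - x = -(α * δ) := by rw [hXα]; ring
  have hk : (0 : ℚ) ≤ k := by positivity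
  have hcx : (1 : ℤ) ≤ c * x := one_le_mul_of_one_le_of_one_le (by exact_mod_cast hc) hx
  refine ⟨by omega, by omega, ?_, ?_, ?_⟩
  · rw [hδ']; simpa using ⟨hα0.ne', hδ⟩
  · rw [hδ', abs_neg, abs_mul, abs_of_pos hα0]
    calc k * X * (α * |δ|) = k * |δ| * (x - α * δ) := by rw [← hXα]; ring
      _ ≤ 1 := by
        rcases hδ.lt_or_gt with hneg | hpos
        · have := hbelow hneg
          rw [abs_of_neg hneg] at this ⊢
          nlinarith [mul_nonneg hk (mul_nonneg (neg_nonneg.2 hneg.le) (neg_nonneg.2 hneg.le))]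
        · rw [abs_of_pos hpos] at hbound ⊢
          nlinarith [mul_nonneg hk (mul_nonneg hpos.le hpos.le)]
  · rw [hδ', neg_lt_zero, abs_neg, abs_mul, abs_of_pos hα0]
    intro hpos
    have hδpos : 0 < δ := pos_of_mul_pos_right hpos hα0.le
    rw [abs_of_pos hδpos] at hbound ⊢
    calc k * (α * δ) * (X + α * δ) = k * x * δ - k * α * (1 - α) * δ ^ 2 := by
          linear_combination (k * δ) * hXα
      _ ≤ 1 := by nlinarith [mul_nonneg (mul_nonneg hk hα0.le) (sub_nonneg.2 hα1)]

lemma lt_and_abs_lt_of_mul_abs_le {a q X P : ℤ} (ha : 0 < a) (haq : a < q) (hX : 1 ≤ X)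
    (hY : a * X - q * P ≠ 0) (h : X * |a * X - q * P| ≤ q) :
    X < q ∧ |a * X - q * P| < q := by
  have hY1 : 1 ≤ |a * X - q * P| := Int.one_le_abs hY
  constructor
  · by_contra! hXq
    have : q ≤ |a * X - q * P| := by
      have hXeq : X = q := by nlinarith
      rw [hXeq, ← mul_comm q, ← mul_sub, abs_mul, abs_of_pos (ha.trans haq)]
      rw [hXeq, ← mul_comm q, ← mul_sub] at hY
      exact le_mul_of_one_le_right (ha.trans haq).le (Int.one_le_abs (right_ne_zero_of_mul hY))
    nlinarith
  · by_contra! hYq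
    have hXeq : X = 1 := by nlinarith
    subst hXeq
    have hqa : q ∣ a := by
      rcases abs_cases (a * 1 - q * P) with ⟨habs, -⟩ | ⟨habs, -⟩
      · exact ⟨P + 1, by linarith⟩
      · exact ⟨P - 1, by linarith⟩
    exact absurd (Int.le_of_dvd ha hqa) (not_le.2 haq)

lemma exists_isGoodApprox_cfVal :
    ∀ {l : List ℕ}, (∀ c ∈ l, 1 ≤ c) → ∀ k ∈ l, ∃ X P, IsGoodApprox k (cfVal l) X P
  | [], _, _, hk => absurd hk List.not_mem_nil
  | c :: l, hl, k, hk => by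
    have hc : 1 ≤ c := hl c List.mem_cons_self
    have hα : cfVal (c :: l) * (c + cfVal l) = 1 := by
      have := cfVal_nonneg l
      rw [cfVal, one_div, inv_mul_cancel₀ (by positivity)]
    rcases List.mem_cons.1 hk with rfl | hk
    · exact ⟨1, 0, isGoodApprox_one_zero hc (cfVal_nonneg l) hα⟩
    · obtain ⟨x, P, h⟩ :=
        exists_isGoodApprox_cfVal (fun c hc => hl c (List.mem_cons_of_mem _ hc)) k hk
      exact ⟨_, _, h.lift hc (cfVal_nonneg l) hα⟩

lemma IsGoodApprox.mul_abs_le {k : ℕ} {a q X P : ℤ} (hq : 0 < q)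
    (h : IsGoodApprox k (a / q) X P) :
    a * X - q * P ≠ 0 ∧ k * (X * |a * X - q * P|) ≤ q := by
  obtain ⟨-, -, hδ, hbound, -⟩ := h
  have hY : ((a * X - q * P : ℤ) : ℚ) = q * (X * (a / q) - P) := by
    push_cast; field_simp
  have hq' : (0 : ℚ) < q := by exact_mod_cast hq
  constructor
  · exact_mod_cast hY ▸ mul_ne_zero hq'.ne' hδ
  · have : (k : ℚ) * (X * |((a * X - q * P : ℤ) : ℚ)|) ≤ q := by
      rw [hY, abs_mul, abs_of_pos hq']
      nlinarith
    exact_mod_cast this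

theorem stmt_0_general (q a : ℕ) (ha : 1 ≤ a) (ha' : a < q)
    (c : List ℕ) (hc : IsCF a q c) (M : ℝ) (hM : 0 < M)
    (h : ∀ x y : ℤ, 1 ≤ x → x < (q : ℤ) → 1 ≤ |y| → |y| < (q : ℤ) →
      (a : ℤ) * x ≡ y [ZMOD (q : ℤ)] → (q : ℝ) / M ≤ ((x * |y| : ℤ) : ℝ)) :
    ∀ cj ∈ c, (cj : ℝ) ≤ M := by
  obtain ⟨-, hpos, -, hval⟩ := hc
  intro k hk
  obtain ⟨X, P, hgood⟩ := exists_isGoodApprox_cfVal hpos k hk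
  rw [hval] at hgood
  have hq : (0 : ℤ) < q := by omega
  obtain ⟨hY, hkY⟩ :=
    IsGoodApprox.mul_abs_le (a := a) hq (by rwa [Int.cast_natCast, Int.cast_natCast])
  have hXY : X * |a * X - q * P| ≤ q :=
    (le_mul_of_one_le_left (by positivity [hgood.1]) (by exact_mod_cast hpos k hk)).trans hkY
  obtain ⟨hXq, hYq⟩ := lt_and_abs_lt_of_mul_abs_le (by omega) (by omega) hgood.1 hY hXY
  have hsmall := h X _ hgood.1 hXq (Int.one_le_abs hY) hYq (Int.modEq_iff_dvd.2 ⟨-P, by ring⟩)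
  have hkY' : (k : ℝ) * ((X * |a * X - q * P| : ℤ) : ℝ) ≤ q := by exact_mod_cast hkY
  rw [div_le_iff₀ hM] at hsmall
  have hqR : (0 : ℝ) < q := by exact_mod_cast hq
  nlinarith

theorem stmt_0 (q a : ℕ) (hq : 2 ≤ q) (ha : 1 ≤ a) (ha' : a < q)
    (hco : Nat.Coprime a q) (c : List ℕ) (hc : IsCF a q c) (M : ℝ) (hM : 0 < M)
    (h : ∀ x y : ℤ, 1 ≤ x → x < (q : ℤ) → 1 ≤ |y| → |y| < (q : ℤ) →
      (a : ℤ) * x ≡ y [ZMOD (q : ℤ)] → (q : ℝ) / M ≤ ((x * |y| : ℤ) : ℝ)) :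
    ∀ cj ∈ c, (cj : ℝ) ≤ M :=
  stmt_0_general q a ha ha' c hc M hM h
end

section
/- For positive integers c_1, …, c_t with c_t ≥ 2 and any positive integer X, the continuant identity K(c_1, …, c_{t-1}, c_t, X, 1, c_t − 1, c_{t-1}, …, c_1) = K(c_1, …, c_t) · K(1, c_t − 1, c_{t-1}, …, c_1) · (X + 1) holds. -/
/-- The continuant `K(d₁, …, d_k)`, defined via the product of the matrices
`[[dᵢ, 1], [1, 0]]`; it satisfies `K() = 1`, `K(d₁) = d₁` and
`K(d₁, …, d_k) = d_k · K(d₁, …, d_{k-1}) + K(d₁, …, d_{k-2})`. -/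
def contK (l : List ℕ) : ℕ :=
  ((l.map (fun d => !![d, 1; 1, 0])).prod : Matrix (Fin 2) (Fin 2) ℕ) 0 0

/-!
Write `M d = [[d, 1], [1, 0]]`, so that `K(d₁, …, d_k)` is the `(0, 0)` entry of
`M d₁ ⋯ M d_k`; since each `M d` is symmetric, reversing the list transposes the product and
`K` is invariant under reversal. With `l = l' ++ [c]` and `A = M l'`, the left-hand side is
`(A N Aᵀ)₀₀` for `N = M c · M X · M 1 · M (c - 1) = (X + 1) u uᵀ + [[0, 1], [-1, 0]]`,
`u = (c, 1)`. The antisymmetric part does not contribute to the quadratic form, so the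
left-hand side is `(X + 1) (A u)₀² = (X + 1) K(l)²`. Finally `M 1 · M (c - 1)` has first row
`(c, 1)`, like `M c`, so `K(1, c - 1, …) = K(c, …)`, which is `K(l)` after reversal.
-/

open Matrix

lemma Matrix.fin_two_mul_mul_transpose_apply_zero_zero {R : Type*} [CommSemiring R]
    (A N : Matrix (Fin 2) (Fin 2) R) (s u v : R) (h₀₀ : N 0 0 = s * u * u)
    (h₁₁ : N 1 1 = s * v * v) (h₀₁ : N 0 1 + N 1 0 = 2 * s * u * v) :
    (A * N * Aᵀ) 0 0 = s * (A 0 0 * u + A 0 1 * v) ^ 2 := by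
  calc (A * N * Aᵀ) 0 0
      = A 0 0 ^ 2 * N 0 0 + A 0 0 * A 0 1 * (N 0 1 + N 1 0) + A 0 1 ^ 2 * N 1 1 := by
        simp only [mul_apply, Fin.sum_univ_two, transpose_apply]
        ring
    _ = s * (A 0 0 * u + A 0 1 * v) ^ 2 := by
        rw [h₀₀, h₀₁, h₁₁]
        ring

namespace Continuant

def contMat (d : ℕ) : Matrix (Fin 2) (Fin 2) ℕ := !![d, 1; 1, 0]

lemma contK_eq_prod (l : List ℕ) : contK l = (l.map contMat).prod 0 0 := rfl

lemma contMat_transpose (d : ℕ) : (contMat d)ᵀ = contMat d := by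
  ext i j
  fin_cases i <;> fin_cases j <;> rfl

lemma prod_map_contMat_reverse (l : List ℕ) :
    (l.reverse.map contMat).prod = (l.map contMat).prodᵀ := by
  induction l with
  | nil => simp
  | cons d l ih =>
    rw [List.reverse_cons, List.map_append, List.prod_append, ih, List.map_singleton,
      List.prod_singleton, List.map_cons, List.prod_cons, transpose_mul, contMat_transpose]

lemma contK_reverse (l : List ℕ) : contK l.reverse = contK l := by
  rw [contK_eq_prod, prod_map_contMat_reverse, transpose_apply, contK_eq_prod]

lemma contK_one_pred_cons {c : ℕ} (hc : 1 ≤ c) (l : List ℕ) :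
    contK (1 :: (c - 1) :: l) = contK (c :: l) := by
  obtain ⟨d, rfl⟩ := Nat.exists_eq_add_of_le' hc
  simp [contK_eq_prod, contMat, mul_apply, vecMul, dotProduct, Fin.sum_univ_two]
  ring

lemma contK_mirror_eq_sq_mul (l : List ℕ) (c X : ℕ) (hc : 1 ≤ c) :
    contK (l ++ [c] ++ [X, 1, c - 1] ++ l.reverse) = contK (l ++ [c]) ^ 2 * (X + 1) := by
  obtain ⟨d, rfl⟩ := Nat.exists_eq_add_of_le' hc
  set A := (l.map contMat).prod
  have hK : contK (l ++ [d + 1]) = A 0 0 * (d + 1) + A 0 1 * 1 := by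
    simp [contK_eq_prod, A, contMat, mul_apply, Fin.sum_univ_two]
  have hN : contK (l ++ [d + 1] ++ [X, 1, d + 1 - 1] ++ l.reverse)
      = (A * (contMat (d + 1) * contMat X * contMat 1 * contMat d) * Aᵀ) 0 0 := by
    simp only [contK_eq_prod, List.map_append, List.prod_append, prod_map_contMat_reverse,
      List.map_cons, List.map_nil, List.prod_cons, List.prod_nil, mul_one, Nat.add_sub_cancel,
      Matrix.mul_assoc, A]
  rw [hN, hK, fin_two_mul_mul_transpose_apply_zero_zero _ _ (X + 1) (d + 1) 1] <;>
    simp [contMat, mul_apply, Fin.sum_univ_two] <;> ring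

end Continuant

open Continuant in
theorem stmt_2_general (l : List ℕ) (hne : l ≠ [])
    (hlast : 2 ≤ l.getLast hne) (X : ℕ) :
    contK (l ++ [X, 1, l.getLast hne - 1] ++ l.dropLast.reverse)
      = contK l * contK ([1, l.getLast hne - 1] ++ l.dropLast.reverse) * (X + 1) := by
  have hc : 1 ≤ l.getLast hne := by omega
  have hl : l.dropLast ++ [l.getLast hne] = l := List.dropLast_append_getLast hne
  have hK : contK ([1, l.getLast hne - 1] ++ l.dropLast.reverse) = contK l := by
    rw [List.cons_append, List.cons_append, contK_one_pred_cons hc, List.nil_append,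
      ← List.reverse_concat', hl, contK_reverse]
  have h := contK_mirror_eq_sq_mul l.dropLast _ X hc
  rw [hl] at h
  rw [hK, ← sq, h]

theorem stmt_2 (l : List ℕ) (hne : l ≠ []) (hpos : ∀ x ∈ l, 1 ≤ x)
    (hlast : 2 ≤ l.getLast hne) (X : ℕ) (hX : 1 ≤ X) :
    contK (l ++ [X, 1, l.getLast hne - 1] ++ l.dropLast.reverse)
      = contK l * contK ([1, l.getLast hne - 1] ++ l.dropLast.reverse) * (X + 1) :=
  stmt_2_general l hne hlast X
end

section
/- Let q̃ ≥ 2 be an integer. Then for every positive integer n there exists a positive integer a_n coprime to q̃^n such that in the continued fraction expansion a_n/q̃^n = [0; c_1, …, c_s] all partial quotients satisfy c_j ≤ q̃² − 1. -/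
open Matrix

def cfMat (l : List ℕ) : Matrix (Fin 2) (Fin 2) ℕ := (l.map fun a => !![a, 1; 1, 0]).prod

def cfDen (l : List ℕ) : ℕ := cfMat l 0 0

def cfNum (l : List ℕ) : ℕ := cfMat l 1 0

lemma cfMat_nil : cfMat [] = 1 := rfl

lemma cfMat_cons (a : ℕ) (l : List ℕ) : cfMat (a :: l) = !![a, 1; 1, 0] * cfMat l := by
  simp [cfMat]

lemma cfMat_append (l₁ l₂ : List ℕ) : cfMat (l₁ ++ l₂) = cfMat l₁ * cfMat l₂ := by
  simp [cfMat]

lemma cfMat_reverse (l : List ℕ) : cfMat l.reverse = (cfMat l)ᵀ := by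
  rw [cfMat, cfMat, transpose_list_prod, List.map_map, ← List.map_reverse]
  congr 2
  funext a
  ext i j
  fin_cases i <;> fin_cases j <;> rfl

@[simp] lemma cfDen_nil : cfDen [] = 1 := rfl

@[simp] lemma cfNum_nil : cfNum [] = 0 := rfl

@[simp] lemma cfDen_cons (a : ℕ) (l : List ℕ) : cfDen (a :: l) = a * cfDen l + cfNum l := by
  simp [cfDen, cfNum, cfMat_cons, mul_apply, Fin.sum_univ_two]

@[simp] lemma cfNum_cons (a : ℕ) (l : List ℕ) : cfNum (a :: l) = cfDen l := by
  simp [cfDen, cfNum, cfMat_cons, mul_apply, Fin.sum_univ_two]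

lemma cfDen_pos {l : List ℕ} (hl : ∀ x ∈ l, 1 ≤ x) : 0 < cfDen l := by
  induction l with
  | nil => simp
  | cons a l ih =>
    have hpos : 0 < cfDen l := ih fun x hx => hl x (List.mem_cons_of_mem a hx)
    rw [cfDen_cons]
    nlinarith [hl a List.mem_cons_self]

lemma cfNum_lt_cfDen {l : List ℕ} (hl : ∀ x ∈ l, 1 ≤ x) (hlast : 2 ≤ l.getLast!) :
    cfNum l < cfDen l :=
  match l, hl, hlast with
  | [], _, hlast => by simp at hlast
  | [a], _, hlast => by simpa [Nat.lt_iff_add_one_le] using hlast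
  | a :: b :: l, hl, _ => by
    have ha := hl a List.mem_cons_self
    have hpos : 0 < cfDen l := cfDen_pos fun x hx => hl x (by simp [hx])
    rw [cfNum_cons, cfDen_cons a, cfNum_cons]
    nlinarith

lemma coprime_cfNum_cfDen (l : List ℕ) : Nat.Coprime (cfNum l) (cfDen l) := by
  induction l with
  | nil => simp
  | cons a l ih => simpa [Nat.coprime_add_mul_left_right, add_comm, mul_comm] using ih.symm

lemma cfVal_eq_cfNum_div_cfDen {l : List ℕ} (hl : ∀ x ∈ l, 1 ≤ x) :
    cfVal l = (cfNum l : ℚ) / cfDen l := by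
  induction l with
  | nil => simp [cfVal]
  | cons a l ih =>
    have hl' : ∀ x ∈ l, 1 ≤ x := fun x hx => hl x (List.mem_cons_of_mem a hx)
    have hpos : (0 : ℚ) < cfDen l := by exact_mod_cast cfDen_pos hl'
    rw [cfVal, ih hl', cfDen_cons, cfNum_cons]
    push_cast
    field_simp

lemma isCF_cfNum_cfDen {l : List ℕ} (hne : l ≠ []) (hl : ∀ x ∈ l, 1 ≤ x) (hlast : 2 ≤ l.getLast!) :
    IsCF (cfNum l) (cfDen l) l :=
  ⟨hne, hl, hlast, cfVal_eq_cfNum_div_cfDen hl⟩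

lemma cfNum_pos {l : List ℕ} (hne : l ≠ []) (hl : ∀ x ∈ l, 1 ≤ x) : 0 < cfNum l := by
  obtain ⟨a, l, rfl⟩ := List.exists_cons_of_ne_nil hne
  rw [cfNum_cons]
  exact cfDen_pos fun x hx => hl x (List.mem_cons_of_mem a hx)

lemma exists_coprime_isCF_of_word {q N : ℕ} {w : List ℕ} (hne : w ≠ [])
    (hw : ∀ x ∈ w, 1 ≤ x ∧ x < q ^ 2) (hlast : 2 ≤ w.getLast!) (hN : cfDen w = N) :
    ∃ a : ℕ, 0 < a ∧ a < N ∧ Nat.Coprime a N ∧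
      ∃ c : List ℕ, IsCF a N c ∧ ∀ cj ∈ c, cj ≤ q ^ 2 - 1 := by
  have hpos : ∀ x ∈ w, 1 ≤ x := fun x hx => (hw x hx).1
  subst hN
  exact ⟨cfNum w, cfNum_pos hne hpos, cfNum_lt_cfDen hpos hlast, coprime_cfNum_cfDen w, w,
    isCF_cfNum_cfDen hne hpos hlast, fun x hx => Nat.le_sub_one_of_lt (hw x hx).2⟩

lemma cfDen_fold_one (v : List ℕ) (b : ℕ) :
    cfDen (v ++ [b + 2, b] ++ v.reverse) = cfDen (v ++ [b + 1]) ^ 2 := by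
  simp only [cfDen, cfMat_append, cfMat_reverse, cfMat_cons, cfMat_nil, mul_one, mul_apply,
    transpose_apply, Fin.sum_univ_two, of_apply, cons_val', cons_val_zero, cons_val_one,
    cons_val_fin_one]
  ring

lemma cfDen_fold_succ (v : List ℕ) (b s : ℕ) :
    cfDen (v ++ [b + 1, s, 1, b] ++ v.reverse) = (s + 1) * cfDen (v ++ [b + 1]) ^ 2 := by
  simp only [cfDen, cfMat_append, cfMat_reverse, cfMat_cons, cfMat_nil, mul_one, mul_apply,
    transpose_apply, Fin.sum_univ_two, of_apply, cons_val', cons_val_zero, cons_val_one,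
    cons_val_fin_one]
  ring

/-- The end conditions are what `fold` needs: the folded word ends with the first quotient `h`,
and the last quotient `a` becomes `a - 1` and `a + 1`. -/
def HasFoldableWord (q N : ℕ) : Prop :=
  ∃ h u a, 2 ≤ h ∧ h + 2 ≤ q ^ 2 ∧ 2 ≤ a ∧ a + 2 ≤ q ^ 2 ∧ (∀ x ∈ u, 1 ≤ x ∧ x < q ^ 2) ∧
    cfDen (h :: u ++ [a]) = N

namespace HasFoldableWord

variable {q N : ℕ}

lemma exists_coprime_isCF (g : HasFoldableWord q N) :
    ∃ a : ℕ, 0 < a ∧ a < N ∧ Nat.Coprime a N ∧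
      ∃ c : List ℕ, IsCF a N c ∧ ∀ cj ∈ c, cj ≤ q ^ 2 - 1 := by
  obtain ⟨h, u, a, hh, hh', ha, ha', hu, hN⟩ := g
  refine exists_coprime_isCF_of_word (by simp) ?_ ?_ hN
  · simp only [List.cons_append, List.mem_cons, List.mem_append, List.not_mem_nil, or_false]
    rintro x (rfl | hx | rfl)
    exacts [⟨by omega, by omega⟩, hu x hx, ⟨by omega, by omega⟩]
  · rwa [List.getLast!_eq_getLast?_getD, List.getLast?_concat]

lemma fold (g : HasFoldableWord q N) {t : ℕ} (ht : 1 ≤ t) (ht' : t ≤ q ^ 2) :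
    HasFoldableWord q (t * N ^ 2) := by
  obtain ⟨h, u, a, hh, hh', ha, ha', hu, rfl⟩ := g
  obtain ⟨b, rfl⟩ : ∃ b, a = b + 1 := ⟨a - 1, by omega⟩
  obtain ⟨s, rfl⟩ : ∃ s, t = s + 1 := ⟨t - 1, by omega⟩
  rcases Nat.eq_zero_or_pos s with rfl | hs
  · refine ⟨h, u ++ [b + 2, b] ++ u.reverse, h, hh, hh', hh, hh', ?_, ?_⟩
    · simp only [List.mem_append, List.mem_reverse, List.mem_cons, List.not_mem_nil, or_false]
      rintro x ((hx | rfl | rfl) | hx)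
      exacts [hu x hx, ⟨by omega, by omega⟩, ⟨by omega, by omega⟩, hu x hx]
    · simpa using cfDen_fold_one (h :: u) b
  · refine ⟨h, u ++ [b + 1, s, 1, b] ++ u.reverse, h, hh, hh', hh, hh', ?_, ?_⟩
    · simp only [List.mem_append, List.mem_reverse, List.mem_cons, List.not_mem_nil, or_false]
      rintro x ((hx | rfl | rfl | rfl | rfl) | hx)
      exacts [hu x hx, ⟨by omega, by omega⟩, ⟨by omega, by omega⟩, ⟨by omega, by omega⟩,
        ⟨by omega, by omega⟩, hu x hx]
    · simpa using cfDen_fold_succ (h :: u) b s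

lemma fold_pow {m : ℕ} (g : HasFoldableWord q (q ^ m)) {k : ℕ} (hk : k ≤ 2) :
    HasFoldableWord q (q ^ (2 * m + k)) := by
  have hq : 0 < q := by
    obtain ⟨h, -, -, hh, hh', -⟩ := g
    exact Nat.pos_of_ne_zero (by rintro rfl; simp at hh')
  rw [pow_add, mul_comm, pow_mul']
  exact g.fold (Nat.one_le_pow _ _ hq) (Nat.pow_le_pow_right hq hk)

end HasFoldableWord

lemma hasFoldableWord_pow_of_base {q n₀ : ℕ} (hn₀ : 0 < n₀)
    (hbase : ∀ n, n₀ ≤ n → n < 2 * n₀ → HasFoldableWord q (q ^ n)) :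
    ∀ n, n₀ ≤ n → HasFoldableWord q (q ^ n) := by
  intro n
  induction n using Nat.strong_induction_on with
  | _ n ih =>
    intro hn
    by_cases hsmall : n < 2 * n₀
    · exact hbase n hn hsmall
    have hsplit : n = 2 * (n / 2) + n % 2 := (Nat.div_add_mod n 2).symm
    rw [hsplit]
    exact (ih (n / 2) (by omega) (by omega)).fold_pow (by omega)

lemma hasFoldableWord_pow_of_three_le {q n : ℕ} (hq : 3 ≤ q) (hn : 2 ≤ n) :
    HasFoldableWord q (q ^ n) := by
  obtain ⟨p, rfl⟩ : ∃ p, q = p + 1 := ⟨q - 1, by omega⟩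
  have hp : p ^ 2 + 2 * p + 1 = (p + 1) ^ 2 := by ring
  refine hasFoldableWord_pow_of_base (n₀ := 2) (by norm_num) (fun m hm hm' => ?_) n hn
  obtain rfl | rfl : m = 2 ∨ m = 3 := by omega
  · refine ⟨p + 2, [], p, by omega, by nlinarith, by omega, by nlinarith, by simp, ?_⟩
    simp only [List.cons_append, List.nil_append, cfDen_cons, cfNum_cons, cfDen_nil, cfNum_nil]
    ring
  · refine ⟨p + 1, [p, 1], p, by omega, by nlinarith, by omega, by nlinarith, ?_, ?_⟩
    · simp only [List.mem_cons, List.not_mem_nil, or_false]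
      rintro x (rfl | rfl) <;> constructor <;> nlinarith
    · simp
      ring

lemma hasFoldableWord_two_pow {n : ℕ} (hn : 3 ≤ n) (hn5 : n ≠ 5) :
    HasFoldableWord 2 (2 ^ n) := by
  have h3 : HasFoldableWord 2 (2 ^ 3) := ⟨2, [1], 2, by decide⟩
  have h4 : HasFoldableWord 2 (2 ^ 4) := ⟨2, [3], 2, by decide⟩
  -- `2 ^ 5` has no foldable word, so `2 ^ 11` is a base case too.
  obtain rfl | rfl | hn : n = 3 ∨ n = 4 ∨ 6 ≤ n := by omega
  · exact h3
  · exact h4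
  refine hasFoldableWord_pow_of_base (n₀ := 6) (by norm_num) (fun m hm hm' => ?_) n hn
  interval_cases m
  exacts [h3.fold_pow (k := 0) (by norm_num), h3.fold_pow (k := 1) (by norm_num),
    h4.fold_pow (k := 0) (by norm_num), h4.fold_pow (k := 1) (by norm_num),
    h4.fold_pow (k := 2) (by norm_num), ⟨2, [2, 1, 1, 3, 3, 2, 1, 1], 2, by decide⟩]

theorem stmt_4 (q : ℕ) (hq : 2 ≤ q) (n : ℕ) (hn : 1 ≤ n) :
    ∃ a : ℕ, 0 < a ∧ a < q ^ n ∧ Nat.Coprime a (q ^ n) ∧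
      ∃ c : List ℕ, IsCF a (q ^ n) c ∧ ∀ cj ∈ c, cj ≤ q ^ 2 - 1 := by
  obtain rfl | hn2 : n = 1 ∨ 2 ≤ n := by omega
  · refine exists_coprime_isCF_of_word (w := [q]) (by simp) ?_ (by simpa using hq) (by simp)
    simp only [List.mem_cons, List.not_mem_nil, or_false, forall_eq]
    constructor <;> nlinarith
  obtain rfl | hq3 : q = 2 ∨ 3 ≤ q := by omega
  · obtain rfl | rfl | hn := (by omega : n = 2 ∨ n = 5 ∨ 3 ≤ n ∧ n ≠ 5)
    · exact exists_coprime_isCF_of_word (w := [1, 3]) (by simp) (by decide) (by decide) (by decide)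
    · exact exists_coprime_isCF_of_word (w := [1, 3, 1, 1, 3]) (by simp) (by decide) (by decide)
        (by decide)
    · exact (hasFoldableWord_two_pow hn.1 hn.2).exists_coprime_isCF
  · exact (hasFoldableWord_pow_of_three_le hq3 hn2).exists_coprime_isCF
end

section
/- The matrices u = [[1, 2], [0, 1]] and v = [[1, 0], [2, 1]] generate a free subgroup of SL_2(ℤ) of rank 2. -/
/-!
Ping-pong on the upper half-plane. `u` acts as `z ↦ z + 2`, so it maps everything outside
`{Re z < -1}` into `{Re z ≥ 1}`, and `u⁻¹` everything outside `{Re z ≥ 1}` into `{Re z < -1}`.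
`v` is the conjugate of `u⁻¹` by `S : z ↦ -1/z`, so its ping-pong sets are the images of these
half-planes under `S`, and `S` maps `{|Re z| ≥ 1}` into the strip `{|Re z| < 1}`. The four sets are
therefore pairwise disjoint, and the ping-pong lemma applies.
-/

/-- The matrix `u = [[1,2],[0,1]]` as an element of `SL₂(ℤ)`. -/
def uMat : Matrix.SpecialLinearGroup (Fin 2) ℤ :=
  ⟨!![1, 2; 0, 1], by norm_num [Matrix.det_fin_two_of]⟩

/-- The matrix `v = [[1,0],[2,1]]` as an element of `SL₂(ℤ)`. -/
def vMat : Matrix.SpecialLinearGroup (Fin 2) ℤ :=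
  ⟨!![1, 0; 2, 1], by norm_num [Matrix.det_fin_two_of]⟩

open UpperHalfPlane ModularGroup
open scoped Pointwise Function

section PingPong

-- `FreeGroup.injective_lift_of_ping_pong` needs `G` in the universe of the index type `Fin 2`.
variable {G : Type} {α : Type*} [Group G] [MulAction G α]

def IsPingPong (a : G) (X Y : Set α) : Prop :=
  a • Yᶜ ⊆ X ∧ a⁻¹ • Xᶜ ⊆ Y

namespace IsPingPong

variable {a : G} {X Y : Set α}

theorem inv (h : IsPingPong a X Y) : IsPingPong a⁻¹ Y X :=
  ⟨h.2, by simpa only [inv_inv] using h.1⟩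

theorem conj (h : IsPingPong a X Y) (g : G) : IsPingPong (g * a * g⁻¹) (g • X) (g • Y) := by
  constructor
  · rw [← Set.smul_set_compl, mul_smul, mul_smul, inv_smul_smul]
    exact Set.smul_set_mono h.1
  · rw [← Set.smul_set_compl, mul_inv_rev, mul_inv_rev, inv_inv, mul_smul, mul_smul,
      inv_smul_smul]
    exact Set.smul_set_mono h.2

theorem smul_mem {x : α} (h : IsPingPong a X Y) (hx : x ∉ Y) : a • x ∈ X :=
  h.1 (Set.smul_mem_smul_set hx)

theorem nonempty_of_separated [Nonempty α] {b : G} {X' Y' A : Set α} (h : IsPingPong a X Y)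
    (h' : IsPingPong b X' Y') (hY : Y ⊆ A) (hX' : X' ⊆ Aᶜ) (hY' : Y' ⊆ Aᶜ) : X.Nonempty := by
  obtain ⟨x⟩ := ‹Nonempty α›
  by_cases hx : x ∈ Y
  · have hbx : b • x ∈ X' := h'.smul_mem fun hx' => hY' hx' (hY hx)
    exact ⟨_, h.smul_mem fun hbx' => hX' hbx (hY hbx')⟩
  · exact ⟨_, h.smul_mem hx⟩

end IsPingPong

theorem FreeGroup.injective_lift_fin_two_of_isPingPong [Nonempty α] {a b : G}
    {X₁ Y₁ X₂ Y₂ A : Set α} (ha : IsPingPong a X₁ Y₁) (hb : IsPingPong b X₂ Y₂)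
    (h₁ : Disjoint X₁ Y₁) (h₂ : Disjoint X₂ Y₂)
    (hX₁ : X₁ ⊆ A) (hY₁ : Y₁ ⊆ A) (hX₂ : X₂ ⊆ Aᶜ) (hY₂ : Y₂ ⊆ Aᶜ) :
    Function.Injective (FreeGroup.lift fun i : Fin 2 => if i = 0 then a else b) := by
  have hA {s t : Set α} (hs : s ⊆ A) (ht : t ⊆ Aᶜ) : Disjoint s t :=
    disjoint_compl_right.mono hs ht
  have hpair {s t : Set α} (h : Disjoint s t) : Pairwise (Disjoint on ![s, t]) := by
    intro i j hij
    fin_cases i <;> fin_cases j <;> simp_all [Function.onFun, h.symm]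
  refine FreeGroup.injective_lift_of_ping_pong _ ![X₁, X₂] ![Y₁, Y₂] ?_
    (hpair (hA hX₁ hX₂)) (hpair (hA hY₁ hY₂))
    ?_ ?_ ?_ <;> simp only [Fin.forall_fin_two, Matrix.cons_val_zero, Matrix.cons_val_one]
  · exact ⟨ha.nonempty_of_separated hb hY₁ hX₂ hY₂,
      hb.nonempty_of_separated ha hY₂ (by rwa [compl_compl]) (by rwa [compl_compl])⟩
  · exact ⟨⟨h₁, hA hX₁ hY₂⟩, ⟨(hA hY₁ hX₂).symm, h₂⟩⟩
  · exact ⟨ha.1, hb.1⟩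
  · exact ⟨ha.2, hb.2⟩

end PingPong

theorem isPingPong_T_zpow_two :
    IsPingPong (T ^ (2 : ℤ)) {z : ℍ | 1 ≤ z.re} {z | z.re < -1} := by
  constructor
  · rintro _ ⟨z, hz, rfl⟩
    simp only [Set.mem_compl_iff, Set.mem_ofPred_eq, not_lt] at hz
    simp only [Set.mem_ofPred_eq, modular_T_zpow_smul, vadd_re]
    push_cast
    linarith
  · rintro _ ⟨z, hz, rfl⟩
    simp only [Set.mem_compl_iff, Set.mem_ofPred_eq, not_le] at hz
    simp only [Set.mem_ofPred_eq, ← zpow_neg, modular_T_zpow_smul, vadd_re]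
    push_cast
    linarith

theorem abs_re_S_smul_lt_one {z : ℍ} (hz : 1 ≤ |z.re|) : |(S • z).re| < 1 := by
  have hpos : 0 < z.re ^ 2 + z.im ^ 2 := by positivity
  have hre : (S • z).re = -z.re / (z.re ^ 2 + z.im ^ 2) := by
    rw [modular_S_smul, ← coe_re, coe_mk, Complex.inv_re, Complex.normSq_apply, Complex.neg_re,
      Complex.neg_im, coe_re, coe_im]
    ring
  rw [hre, abs_div, abs_neg, abs_of_pos hpos, div_lt_one hpos]
  nlinarith [sq_abs z.re, z.im_pos]

theorem S_smul_subset_compl {s : Set ℍ} (hs : s ⊆ {z | 1 ≤ |z.re|}) :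
    S • s ⊆ {z | 1 ≤ |z.re|}ᶜ := by
  rintro _ ⟨z, hz, rfl⟩
  exact (abs_re_S_smul_lt_one (hs hz)).not_ge

theorem uMat_eq_T_zpow_two : uMat = T ^ (2 : ℤ) :=
  Subtype.ext (coe_T_zpow 2).symm

theorem vMat_inv_eq_S_mul_T_zpow_two_mul_S_inv : vMat⁻¹ = S * T ^ (2 : ℤ) * S⁻¹ := by
  apply Subtype.ext
  simp only [Matrix.SpecialLinearGroup.coe_inv, Matrix.SpecialLinearGroup.coe_mul, coe_S,
    coe_T_zpow]
  simp [vMat, Matrix.adjugate_fin_two]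

/-- `u` and `v` generate a free subgroup of `SL₂(ℤ)` of rank `2`: the
homomorphism from the free group on two generators sending the generators to
`u` and `v` is injective (no nontrivial reduced word equals the identity). -/
theorem stmt_6 :
    Function.Injective (FreeGroup.lift (fun i : Fin 2 => if i = 0 then uMat else vMat)) := by
  set R : Set ℍ := {z | 1 ≤ z.re}
  set L : Set ℍ := {z | z.re < -1}
  set A : Set ℍ := {z | 1 ≤ |z.re|}
  have hu : IsPingPong uMat R L := uMat_eq_T_zpow_two ▸ isPingPong_T_zpow_two
  have hv : IsPingPong vMat (S • L) (S • R) := by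
    simpa only [← vMat_inv_eq_S_mul_T_zpow_two_mul_S_inv, inv_inv] using
      (isPingPong_T_zpow_two.conj S).inv
  have hRL : Disjoint R L := Set.disjoint_left.2 fun z (hR : 1 ≤ z.re) (hL : z.re < -1) => by
    linarith
  have hRA : R ⊆ A := fun z (hz : 1 ≤ z.re) => le_abs.2 (Or.inl hz)
  have hLA : L ⊆ A := fun z (hz : z.re < -1) => le_abs.2 (Or.inr (by linarith : 1 ≤ -z.re))
  exact FreeGroup.injective_lift_fin_two_of_isPingPong hu hv hRL
    (Set.disjoint_smul_set.2 hRL.symm) hRA hLA (S_smul_subset_compl hLA)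
    (S_smul_subset_compl hRA)
end

section
/- For each positive integer j let g_j = v^j u^{-j} where u = [[1,2],[0,1]] and v = [[1,0],[2,1]]. Then g_j = [[1, −2j], [2j, 1 − 4j²]], and for any N ≥ 1 the set {g_1, …, g_N} generates a free subgroup of SL_2(ℤ) of rank N. -/
def gMat (j : ℕ) : Matrix.SpecialLinearGroup (Fin 2) ℤ := vMat ^ j * uMat⁻¹ ^ j

open Matrix Function
open scoped MatrixGroups

lemma coe_vMat_pow (j : ℕ) :
    ((vMat ^ j : SL(2, ℤ)) : Matrix (Fin 2) (Fin 2) ℤ) = !![1, 0; 2 * (j : ℤ), 1] := by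
  induction j with
  | zero => simp [one_fin_two]
  | succ n ih =>
    rw [pow_succ, Matrix.SpecialLinearGroup.coe_mul, ih,
      show (vMat : Matrix (Fin 2) (Fin 2) ℤ) = !![1, 0; 2, 1] from rfl, mul_fin_two]
    push_cast
    ring_nf

lemma coe_uMat_inv :
    ((uMat⁻¹ : SL(2, ℤ)) : Matrix (Fin 2) (Fin 2) ℤ) = !![1, -2; 0, 1] := by
  rw [Matrix.SpecialLinearGroup.coe_inv,
    show (uMat : Matrix (Fin 2) (Fin 2) ℤ) = !![1, 2; 0, 1] from rfl, adjugate_fin_two]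
  norm_num

lemma coe_uMat_inv_pow (j : ℕ) :
    ((uMat⁻¹ ^ j : SL(2, ℤ)) : Matrix (Fin 2) (Fin 2) ℤ) =
      !![1, -2 * (j : ℤ); 0, 1] := by
  induction j with
  | zero => simp [one_fin_two]
  | succ n ih =>
    rw [pow_succ, Matrix.SpecialLinearGroup.coe_mul, ih, coe_uMat_inv, mul_fin_two]
    push_cast
    ring_nf

lemma coe_gMat (j : ℕ) :
    (gMat j : Matrix (Fin 2) (Fin 2) ℤ) =
      !![1, -2 * (j : ℤ); 2 * (j : ℤ), 1 - 4 * (j : ℤ) ^ 2] := by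
  rw [gMat, Matrix.SpecialLinearGroup.coe_mul, coe_vMat_pow, coe_uMat_inv_pow, mul_fin_two]
  ring_nf

lemma gMat_smul (j : ℕ) (v : Fin 2 → ℤ) :
    gMat j • v = ![v 0 - 2 * j * v 1, 2 * j * v 0 + (1 - 4 * j ^ 2) * v 1] := by
  rw [Matrix.SpecialLinearGroup.smul_def, coe_gMat, smul_eq_mulVec, cons_mulVec, cons_mulVec,
    empty_mulVec, vec2_dotProduct, vec2_dotProduct]
  simp only [cons_val_zero, cons_val_one]
  ring_nf

lemma gMat_inv_smul (j : ℕ) (v : Fin 2 → ℤ) :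
    (gMat j)⁻¹ • v = ![(1 - 4 * j ^ 2) * v 0 + 2 * j * v 1, v 1 - 2 * j * v 0] := by
  rw [Matrix.SpecialLinearGroup.smul_def, Matrix.SpecialLinearGroup.coe_inv, coe_gMat,
    adjugate_fin_two_of, smul_eq_mulVec, cons_mulVec, cons_mulVec, empty_mulVec, vec2_dotProduct,
    vec2_dotProduct]
  simp only [cons_val_zero, cons_val_one]
  ring_nf

/-- `b / a ∈ [-1, 1)`, with the denominator cleared (false when `a = 0`). -/
def UnitSlope (a b : ℤ) : Prop :=
  (0 < a ∧ -a ≤ b ∧ b < a) ∨ (a < 0 ∧ a < b ∧ b ≤ -a)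

lemma unitSlope_or_unitSlope_neg {a b : ℤ} (h : a ≠ 0 ∨ b ≠ 0) :
    UnitSlope a b ∨ UnitSlope b (-a) := by
  unfold UnitSlope
  omega

lemma UnitSlope.eq_zero_of_sub {a b k : ℤ} (h : UnitSlope a b)
    (hk : UnitSlope a (b - 2 * k * a)) : k = 0 := by
  rcases h with ⟨ha, hb⟩ | ⟨ha, hb⟩ <;> rcases hk with ⟨ha', hk⟩ | ⟨ha', hk⟩
  · have h1 : k < 1 := lt_of_mul_lt_mul_right (a := a) (by linarith) ha.le
    have h2 : -1 < k := lt_of_mul_lt_mul_right (a := a) (by linarith) ha.le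
    omega
  · omega
  · omega
  · have h1 : k < 1 := lt_of_mul_lt_mul_of_nonpos_right (c := a) (by linarith) ha.le
    have h2 : -1 < k := lt_of_mul_lt_mul_of_nonpos_right (c := a) (by linarith) ha.le
    omega

lemma not_unitSlope_and_unitSlope {x y i j : ℤ} (hi : 0 < i) (hj : 0 < j)
    (hX : UnitSlope x (y - 2 * i * x)) (hY : UnitSlope y (2 * j * y - x)) : False := by
  rcases hX with ⟨hx, hX⟩ | ⟨hx, hX⟩ <;> rcases hY with ⟨hy, hY⟩ | ⟨hy, hY⟩ <;>
    nlinarith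

def nonzeroVectors (G V : Type*) [Group G] [AddMonoid V] [DistribMulAction G V] :
    SubMulAction G V where
  carrier := {v | v ≠ 0}
  smul_mem' g _ hv := (smul_ne_zero_iff_ne g).2 hv

local notation "ℤ²∖0" => nonzeroVectors SL(2, ℤ) (Fin 2 → ℤ)

lemma ne_zero_or_ne_zero_of_ne_zero {M : Type*} [Zero M] {v : Fin 2 → M} (hv : v ≠ 0) :
    v 0 ≠ 0 ∨ v 1 ≠ 0 := by
  by_contra! h
  exact hv (funext fun i => by fin_cases i <;> simp [h])

lemma sub_mul_ne_zero_or_ne_zero {a b : ℤ} (c : ℤ) (h : a ≠ 0 ∨ b ≠ 0) :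
    a - c * b ≠ 0 ∨ b ≠ 0 := by
  by_contra! h'
  obtain ⟨ha, rfl⟩ := h'
  simp_all

/-- Nonzero vectors `(x, y)` with `y / x ∈ [2j - 1, 2j + 1)`. -/
def pingSet (j : ℕ) : Set ℤ²∖0 :=
  {v | UnitSlope (v.1 0) (v.1 1 - 2 * j * v.1 0)}

/-- Nonzero vectors `(x, y)` with `x / y ∈ (2j - 1, 2j + 1]`. -/
def pongSet (j : ℕ) : Set ℤ²∖0 :=
  {v | UnitSlope (v.1 1) (2 * j * v.1 1 - v.1 0)}

lemma mem_pingSet {j : ℕ} {v : ℤ²∖0} :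
    v ∈ pingSet j ↔ UnitSlope (v.1 0) (v.1 1 - 2 * j * v.1 0) := Iff.rfl

lemma mem_pongSet {j : ℕ} {v : ℤ²∖0} :
    v ∈ pongSet j ↔ UnitSlope (v.1 1) (2 * j * v.1 1 - v.1 0) := Iff.rfl

lemma pingSet_nonempty (j : ℕ) : (pingSet j).Nonempty :=
  ⟨⟨![1, 2 * j], fun h => by simpa using congrFun h 0⟩, by simp [pingSet, UnitSlope]⟩

lemma pairwise_disjoint_pingSet : Pairwise (Disjoint on pingSet) := by
  intro i j hij
  refine Set.disjoint_left.2 fun v hi hj => hij ?_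
  rw [mem_pingSet] at hi hj
  have := UnitSlope.eq_zero_of_sub (k := (j : ℤ) - i) hi (by convert hj using 1; ring)
  omega

lemma pairwise_disjoint_pongSet : Pairwise (Disjoint on pongSet) := by
  intro i j hij
  refine Set.disjoint_left.2 fun v hi hj => hij ?_
  rw [mem_pongSet] at hi hj
  have := UnitSlope.eq_zero_of_sub (k := (i : ℤ) - j) hi (by convert hj using 1; ring)
  omega

lemma disjoint_pingSet_pongSet {i j : ℕ} (hi : 0 < i) (hj : 0 < j) :
    Disjoint (pingSet i) (pongSet j) :=
  Set.disjoint_left.2 fun _ hX hY =>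
    not_unitSlope_and_unitSlope (by exact_mod_cast hi) (by exact_mod_cast hj) hX hY

lemma gMat_smul_mem_pingSet {j : ℕ} {v : ℤ²∖0} (hv : v ∉ pongSet j) :
    gMat j • v ∈ pingSet j := by
  have hne := sub_mul_ne_zero_or_ne_zero (2 * j) (ne_zero_or_ne_zero_of_ne_zero v.2)
  have key := (unitSlope_or_unitSlope_neg hne).resolve_right (by rwa [neg_sub])
  simp only [mem_pingSet, SubMulAction.val_smul, gMat_smul, cons_val_zero, cons_val_one]
  convert key using 2
  ring

lemma gMat_inv_smul_mem_pongSet {j : ℕ} {v : ℤ²∖0} (hv : v ∉ pingSet j) :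
    (gMat j)⁻¹ • v ∈ pongSet j := by
  have hne := (sub_mul_ne_zero_or_ne_zero (2 * j) (ne_zero_or_ne_zero_of_ne_zero v.2).symm).symm
  have key := (unitSlope_or_unitSlope_neg hne).resolve_left hv
  simp only [mem_pongSet, SubMulAction.val_smul, gMat_inv_smul, cons_val_zero, cons_val_one]
  convert key using 2
  ring

theorem injective_lift_gMat_succ : Injective (FreeGroup.lift fun n : ℕ => gMat (n + 1)) :=
  FreeGroup.injective_lift_of_ping_pong _ (fun n => pingSet (n + 1)) (fun n => pongSet (n + 1))
    (fun n => pingSet_nonempty (n + 1))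
    (fun _ _ h => pairwise_disjoint_pingSet (by simpa using h))
    (fun _ _ h => pairwise_disjoint_pongSet (by simpa using h))
    (fun m n => disjoint_pingSet_pongSet m.succ_pos n.succ_pos)
    (fun _ => Set.smul_set_subset_iff.2 fun _ => gMat_smul_mem_pingSet)
    (fun _ => Set.smul_set_subset_iff.2 fun _ => gMat_inv_smul_mem_pongSet)

theorem stmt_7_general (N : ℕ) :
    (∀ j : ℕ, 1 ≤ j →
      (gMat j : Matrix (Fin 2) (Fin 2) ℤ)
        = !![1, -2 * (j : ℤ); 2 * (j : ℤ), 1 - 4 * (j : ℤ) ^ 2]) ∧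
    Function.Injective (FreeGroup.lift (fun i : Fin N => gMat (i + 1))) := by
  refine ⟨fun j _ => coe_gMat j, ?_⟩
  have : FreeGroup.lift (fun i : Fin N => gMat (i + 1)) =
      (FreeGroup.lift fun n : ℕ => gMat (n + 1)).comp (FreeGroup.map Fin.val) := by
    ext
    simp
  rw [this, MonoidHom.coe_comp]
  exact injective_lift_gMat_succ.comp (FreeGroup.map_injective Fin.val_injective)

/-- `g_j = [[1, -2j],[2j, 1-4j²]]`, and for any `N ≥ 1` the matrices
`g_1, …, g_N` generate a free subgroup of `SL₂(ℤ)` of rank `N`: the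
homomorphism from the free group on `N` generators sending the `i`-th
generator to `g_{i+1}` is injective. -/
theorem stmt_7 (N : ℕ) (hN : 1 ≤ N) :
    (∀ j : ℕ, 1 ≤ j →
      (gMat j : Matrix (Fin 2) (Fin 2) ℤ)
        = !![1, -2 * (j : ℤ); 2 * (j : ℤ), 1 - 4 * (j : ℤ) ^ 2]) ∧
    Function.Injective (FreeGroup.lift (fun i : Fin N => gMat (i + 1))) :=
  stmt_7_general N
end

section
/- Let p be an odd prime, n ≥ 1, and g ∈ SL_2(ℤ/p^nℤ) with parameter r = r(g) defined via g = (Tr(g)/2)·I + p^r·g', where g' = [[a,b],[c,−a]] has not all entries divisible by p. Then the centralizer (stabilizer under conjugation) of g in SL_2(ℤ/p^nℤ) has size at most 8·p^{n+2r}. -/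
/-!
Write `g = t + pʳ X` with `X = [[a, b], [c, -a]]`. A matrix `H` commutes with `g` iff
`pʳ [H, X] = 0`, and `[H, X]` is, entrywise, the cross product of the coordinates
`(H₀₁, H₁₀, H₀₀ - H₁₁)` of `H` modulo scalars with `(b, c, 2a)`. Since `p` is odd, one of
`b, c, 2a` is a unit, so `H` is determined by `H₁₁`, one free coordinate and two coordinates
killed by `pʳ`: the centralizer of `g` in `M₂(ℤ/pⁿ)` has at most `p²ⁿ⁺²ʳ` elements.
Multiplying the centralizer in `SL₂` by the `φ(pⁿ)` units lands in it and is at most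
two-to-one, since `det (u h) = u²` and the cyclic group `(ℤ/pⁿ)ˣ` has only two square roots
of `1`. Hence `φ(pⁿ) · |Stab g| ≤ 2 p²ⁿ⁺²ʳ`.
-/

open Matrix Finset
open scoped Nat

namespace Matrix

variable {R : Type*} [CommRing R]

/-- The coordinates of `H` modulo scalar matrices. -/
def nonscalarVec (H : Matrix (Fin 2) (Fin 2) R) : Fin 3 → R :=
  ![H 0 1, H 1 0, H 0 0 - H 1 1]

theorem mul_sub_mul_eq_cross (H X : Matrix (Fin 2) (Fin 2) R) :
    H * X - X * H =
      !![(nonscalarVec H ⨯₃ nonscalarVec X) 2, (nonscalarVec H ⨯₃ nonscalarVec X) 1;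
        (nonscalarVec H ⨯₃ nonscalarVec X) 0, -(nonscalarVec H ⨯₃ nonscalarVec X) 2] := by
  ext i j
  fin_cases i <;> fin_cases j <;>
    simp [nonscalarVec, cross_apply, Matrix.mul_apply, Fin.sum_univ_two] <;> ring

theorem card_cross_mem_le [Fintype R] [DecidableEq R] {v : Fin 3 → R} {i : Fin 3}
    (hv : IsUnit (v i)) (A : Finset R) :
    #{u : Fin 3 → R | ∀ j, (u ⨯₃ v) j ∈ A} ≤ Fintype.card R * #A ^ 2 := by
  obtain ⟨w, hw⟩ := hv.exists_left_inv
  calc #{u : Fin 3 → R | ∀ j, (u ⨯₃ v) j ∈ A}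
      ≤ #((univ : Finset R) ×ˢ A ×ˢ A) := by
        refine card_le_card_of_injOn (fun u => (u i, (u ⨯₃ v) (i + 1), (u ⨯₃ v) (i + 2)))
          (fun u hu => ?_) (fun u _ u' _ huu' => ?_)
        · simp only [coe_filter, Set.mem_ofPred_eq] at hu
          simp [hu]
        · simp only [Prod.mk.injEq] at huu'
          obtain ⟨h0, h1, h2⟩ := huu'
          -- `(u ⨯₃ v) (i + 1)` and `(u ⨯₃ v) (i + 2)` are `u (i + 2) * v i` and
          -- `-u (i + 1) * v i` up to multiples of `u i`.
          fin_cases i <;> simp [cross_apply] at hw h0 h1 h2 <;> ext k <;> fin_cases k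
          all_goals grind
    _ = Fintype.card R * #A ^ 2 := by simp [sq]

theorem injective_apply_one_one_prod_nonscalarVec :
    Function.Injective fun H : Matrix (Fin 2) (Fin 2) R => (H 1 1, nonscalarVec H) := by
  intro H H' hHH'
  simp only [Prod.mk.injEq, nonscalarVec, funext_iff, Fin.forall_fin_succ] at hHH'
  ext i j
  fin_cases i <;> fin_cases j <;> simp at hHH' ⊢ <;> grind

theorem card_centralizer_le [Fintype R] [DecidableEq R] {M X : Matrix (Fin 2) (Fin 2) R}
    {t q : R} (hM : M = t • 1 + q • X) {i : Fin 3} (hX : IsUnit (nonscalarVec X i)) :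
    #{H | H * M = M * H} ≤ Fintype.card R ^ 2 * #{x : R | q * x = 0} ^ 2 := by
  set A : Finset R := {x | q * x = 0}
  have hcross : ∀ H, H * M = M * H → ∀ j, (nonscalarVec H ⨯₃ nonscalarVec X) j ∈ A := by
    intro H hH
    have hq : q • (H * X - X * H) = 0 := by
      rw [smul_sub, ← mul_smul_comm, ← smul_mul_assoc, sub_eq_zero]
      simpa [hM, mul_add, add_mul] using hH
    rw [mul_sub_mul_eq_cross] at hq
    have e0 := congrFun (congrFun hq 1) 0
    have e1 := congrFun (congrFun hq 0) 1
    have e2 := congrFun (congrFun hq 0) 0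
    intro j
    fin_cases j <;> simp_all [A]
  calc #{H | H * M = M * H}
      ≤ #((univ : Finset R) ×ˢ
          ({u : Fin 3 → R | ∀ j, (u ⨯₃ nonscalarVec X) j ∈ A} : Finset _)) := by
        refine card_le_card_of_injOn _ (fun H hH => ?_)
          injective_apply_one_one_prod_nonscalarVec.injOn
        simp only [coe_filter, Set.mem_ofPred_eq, mem_univ, true_and] at hH
        simpa using hcross H hH
    _ ≤ Fintype.card R * (Fintype.card R * #A ^ 2) := by
        rw [card_product, card_univ]
        exact Nat.mul_le_mul_left _ (card_cross_mem_le hX A)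
    _ = Fintype.card R ^ 2 * #A ^ 2 := by ring

end Matrix

theorem card_units_mul_card_centralizer_le {ι R : Type*} [Fintype ι] [DecidableEq ι]
    [CommRing R] [Fintype R] [DecidableEq R] (g : SpecialLinearGroup ι R) :
    Fintype.card Rˣ * #{h | h * g = g * h} ≤
      #{s : Rˣ | s ^ Fintype.card ι = 1} * #{H | H * (g : Matrix ι ι R) = g * H} := by
  set S : Finset (SpecialLinearGroup ι R) := {h | h * g = g * h}
  set f : Rˣ × SpecialLinearGroup ι R → Matrix ι ι R :=
    fun x => (x.1 : R) • (x.2 : Matrix ι ι R)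
  have hdet (x : Rˣ × SpecialLinearGroup ι R) : (f x).det = (x.1 ^ Fintype.card ι : Rˣ) := by
    simp [f]
  rw [← card_univ, ← card_product]
  refine card_le_mul_card_image_of_maps_to (f := f) (fun x hx => ?_) _ (fun N _ => ?_)
  · simp only [S, mem_product, mem_univ, mem_filter, true_and] at hx ⊢
    rw [smul_mul_assoc, mul_smul_comm]
    exact congrArg _ (by simpa using congrArg Subtype.val hx)
  obtain h | ⟨x₀, hx₀⟩ := ({x ∈ univ ×ˢ S | f x = N} : Finset _).eq_empty_or_nonempty
  · simp [h]
  -- `det (u • h) = u ^ card ι`, so `x ↦ x.1 / x₀.1` maps the fibre into the roots of unity.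
  refine card_le_card_of_injOn (fun x => x.1 * x₀.1⁻¹) (fun x hx => ?_)
    (fun x hx y hy hxy => ?_)
  · simp only [coe_filter, Set.mem_ofPred_eq, mem_filter] at hx hx₀
    have hpow : x.1 ^ Fintype.card ι = x₀.1 ^ Fintype.card ι :=
      Units.ext (by rw [← hdet, ← hdet, hx.2, hx₀.2])
    simp only [coe_filter, Set.mem_ofPred_eq, mem_univ, true_and]
    rw [mul_pow, hpow, inv_pow, mul_inv_cancel]
  · simp only [coe_filter, Set.mem_ofPred_eq] at hx hy
    have hu : x.1 = y.1 := mul_right_cancel hxy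
    have hh : (x.2 : Matrix ι ι R) = y.2 := by
      have hN : f x = f y := hx.2.trans hy.2.symm
      simp only [f, hu] at hN
      simpa [smul_smul] using congrArg (((y.1⁻¹ : Rˣ) : R) • ·) hN
    exact Prod.ext hu (Subtype.ext hh)

namespace ZMod

variable {p : ℕ}

theorem isUnit_of_not_natCast_dvd (hp : p.Prime) {n : ℕ} {x : ZMod (p ^ n)}
    (hx : ¬ (p : ZMod (p ^ n)) ∣ x) : IsUnit x := by
  have : NeZero (p ^ n) := ⟨pow_ne_zero n hp.ne_zero⟩
  rw [← natCast_zmod_val x] at hx ⊢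
  rw [isUnit_iff_coprime]
  refine (Nat.Coprime.pow_left n ((hp.coprime_iff_not_dvd).2 fun hdvd => hx ?_)).symm
  exact Nat.cast_dvd_cast hdvd

theorem card_natCast_pow_mul_eq_zero_le (hp : p.Prime) (n r : ℕ) [NeZero (p ^ n)] :
    #{x : ZMod (p ^ n) | (p : ZMod (p ^ n)) ^ r * x = 0} ≤ p ^ r := by
  simpa [nsmul_eq_mul] using
    IsAddCyclic.card_nsmul_eq_zero_le (α := ZMod (p ^ n)) (pow_pos hp.pos r)

theorem card_units_sq_eq_one_le (hp : p.Prime) (hodd : Odd p) (n : ℕ) [NeZero (p ^ n)] :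
    #{u : (ZMod (p ^ n))ˣ | u ^ 2 = 1} ≤ 2 :=
  have := isCyclic_units_of_prime_pow p hp (hodd.ne_two_of_dvd_nat dvd_rfl) n
  IsCyclic.card_pow_eq_one_le two_pos

theorem exists_isUnit_nonscalarVec (hp : p.Prime) (hodd : Odd p) {n : ℕ}
    {a b c : ZMod (p ^ n)}
    (hnv : ¬ ((p : ZMod (p ^ n)) ∣ a ∧ (p : ZMod (p ^ n)) ∣ b ∧
      (p : ZMod (p ^ n)) ∣ c)) :
    ∃ i, IsUnit (nonscalarVec !![a, b; c, -a] i) := by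
  by_cases hb : IsUnit b
  · exact ⟨0, by simpa [nonscalarVec] using hb⟩
  by_cases hc : IsUnit c
  · exact ⟨1, by simpa [nonscalarVec] using hc⟩
  have ha : IsUnit a := isUnit_of_not_natCast_dvd hp fun ha =>
    hnv ⟨ha, not_not.mp (mt (isUnit_of_not_natCast_dvd hp) hb),
      not_not.mp (mt (isUnit_of_not_natCast_dvd hp) hc)⟩
  have h2 : IsUnit (2 : ZMod (p ^ n)) := by
    simpa using (isUnit_iff_coprime 2 (p ^ n)).mpr (Nat.coprime_two_left.mpr hodd.pow)
  exact ⟨2, by simpa [nonscalarVec, ← two_mul] using h2.mul ha⟩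

end ZMod

theorem Nat.pow_le_two_mul_totient_pow {p : ℕ} (hp : p.Prime) (n : ℕ) :
    p ^ n ≤ 2 * φ (p ^ n) := by
  cases n with
  | zero => simp
  | succ n =>
    rw [totient_prime_pow_succ hp, pow_succ]
    have := hp.two_le
    calc p ^ n * p ≤ p ^ n * (2 * (p - 1)) := Nat.mul_le_mul_left _ (by omega)
      _ = 2 * (p ^ n * (p - 1)) := by ring

theorem stmt_11_general (p n : ℕ) (hp : p.Prime) (hodd : Odd p)
    (g : Matrix.SpecialLinearGroup (Fin 2) (ZMod (p ^ n)))
    (t a b c : ZMod (p ^ n)) (r : ℕ)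
    (hg : (g : Matrix (Fin 2) (Fin 2) (ZMod (p ^ n)))
      = t • (1 : Matrix (Fin 2) (Fin 2) (ZMod (p ^ n)))
        + ((p : ZMod (p ^ n)) ^ r) • !![a, b; c, -a])
    (hnv : ¬ (((p : ZMod (p ^ n)) ∣ a) ∧ ((p : ZMod (p ^ n)) ∣ b) ∧
      ((p : ZMod (p ^ n)) ∣ c))) :
    {h : Matrix.SpecialLinearGroup (Fin 2) (ZMod (p ^ n)) | h * g = g * h}.ncard
      ≤ 8 * p ^ (n + 2 * r) := by
  classical
  have : NeZero (p ^ n) := ⟨pow_ne_zero n hp.ne_zero⟩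
  obtain ⟨i, hi⟩ := ZMod.exists_isUnit_nonscalarVec hp hodd hnv
  set S : Finset (SpecialLinearGroup (Fin 2) (ZMod (p ^ n))) := {h | h * g = g * h}
  have hC : #{H | H * (g : Matrix (Fin 2) (Fin 2) (ZMod (p ^ n))) = g * H} ≤
      (p ^ n) ^ 2 * (p ^ r) ^ 2 := by
    refine (card_centralizer_le hg hi).trans ?_
    rw [ZMod.card]
    gcongr
    exact ZMod.card_natCast_pow_mul_eq_zero_le hp n r
  have hS : φ (p ^ n) * #S ≤ 2 * ((p ^ n) ^ 2 * (p ^ r) ^ 2) := by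
    rw [← ZMod.card_units_eq_totient]
    refine (card_units_mul_card_centralizer_le g).trans (Nat.mul_le_mul ?_ hC)
    simpa using ZMod.card_units_sq_eq_one_le hp hodd n
  rw [show {h | h * g = g * h}.ncard = #S by simp [S, Set.ncard_eq_toFinset_card']]
  refine Nat.le_of_mul_le_mul_left ?_ (pow_pos hp.pos n)
  calc p ^ n * #S ≤ 2 * φ (p ^ n) * #S :=
        Nat.mul_le_mul_right _ (Nat.pow_le_two_mul_totient_pow hp n)
    _ ≤ 2 * (2 * ((p ^ n) ^ 2 * (p ^ r) ^ 2)) := by rw [mul_assoc]; exact Nat.mul_le_mul_left 2 hS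
    _ = p ^ n * (4 * p ^ (n + 2 * r)) := by ring
    _ ≤ p ^ n * (8 * p ^ (n + 2 * r)) := by gcongr; norm_num

/-- For odd prime `p` and `g ∈ SL₂(ℤ/pⁿℤ)` written as
`g = (Tr g / 2)·I + pʳ·[[a,b],[c,-a]]` with not all of `a, b, c` divisible by
`p`, the centralizer of `g` in `SL₂(ℤ/pⁿℤ)` has size at most `8·p^{n+2r}`.
Here `t` denotes `Tr g / 2`. -/
theorem stmt_11 (p n : ℕ) (hp : p.Prime) (hodd : Odd p) (hn : 1 ≤ n)
    (g : Matrix.SpecialLinearGroup (Fin 2) (ZMod (p ^ n)))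
    (t a b c : ZMod (p ^ n)) (r : ℕ)
    (ht : 2 * t = Matrix.trace (g : Matrix (Fin 2) (Fin 2) (ZMod (p ^ n))))
    (hg : (g : Matrix (Fin 2) (Fin 2) (ZMod (p ^ n)))
      = t • (1 : Matrix (Fin 2) (Fin 2) (ZMod (p ^ n)))
        + ((p : ZMod (p ^ n)) ^ r) • !![a, b; c, -a])
    (hnv : ¬ (((p : ZMod (p ^ n)) ∣ a) ∧ ((p : ZMod (p ^ n)) ∣ b) ∧
      ((p : ZMod (p ^ n)) ∣ c))) :
    {h : Matrix.SpecialLinearGroup (Fin 2) (ZMod (p ^ n)) | h * g = g * h}.ncard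
      ≤ 8 * p ^ (n + 2 * r) :=
  stmt_11_general p n hp hodd g t a b c r hg hnv
end

section
/- For N ≥ 2 and 0 < s ≤ 1/2, if X is uniform on {1/a : a ∈ [N]} perturbed so that X = 1/c + θ/(c³) with c uniform on [N] and |θ| ≤ 2 (so X ∈ (0,1]), then log E[X^s] ≤ −s·log N + s + s² + C·(log N)/N for an absolute constant C > 0. -/
/-!
Write `X_c = c⁻¹ (1 + t_c)` with `|t_c| ≤ 2 / c²`. Bernoulli's inequality gives
`X_c ^ s ≤ c ^ (-s) + 1 / c²`, and comparing `c ^ (-s)` with the increments of the concave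
function `x ↦ x ^ (1 - s)` gives `∑_{c ≤ N} c ^ (-s) ≤ N ^ (1 - s) / (1 - s)`, so
`E[X ^ s] ≤ N ^ (-s) / (1 - s) + 2 / N`. Since `1 / (1 - s) ≤ exp (s + s²) - s² / 6`,
it remains to bound `2 N ^ s` by `s² N / 6 + C log N`: either `12 N ^ s ≤ s² N`, or
`s² √N < 12`, which forces `s log N < 10` and hence `N ^ s ≤ e ^ 10`.
-/

open Real Finset

/-- Tangent-line inequality for the concave function `x ↦ x ^ p`, `0 ≤ p ≤ 1`. -/
lemma mul_rpow_sub_one_mul_sub_le_rpow_sub_rpow {p x y : ℝ} (hp0 : 0 ≤ p) (hp1 : p ≤ 1)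
    (hy : 0 ≤ y) (hyx : y ≤ x) :
    p * x ^ (p - 1) * (x - y) ≤ x ^ p - y ^ p := by
  rcases (hy.trans hyx).eq_or_lt with rfl | hx
  · simp [le_antisymm hyx hy]
  have hbern : (1 + (y - x) / x) ^ p ≤ 1 + p * ((y - x) / x) :=
    rpow_one_add_le_one_add_mul_self (by rw [le_div_iff₀ hx]; linarith) hp0 hp1
  have hyx' : 1 + (y - x) / x = y / x := by field_simp; ring
  rw [hyx', div_rpow hy hx.le, div_le_iff₀ (rpow_pos_of_pos hx p)] at hbern
  have hexpand : (1 + p * ((y - x) / x)) * x ^ p = x ^ p - p * (x ^ p / x) * (x - y) := by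
    field_simp; ring
  rw [rpow_sub_one hx.ne' p]
  linarith

lemma sum_Icc_rpow_neg_le {s : ℝ} (hs0 : 0 ≤ s) (hs1 : s < 1) (n : ℕ) :
    ∑ c ∈ Icc 1 n, (c : ℝ) ^ (-s) ≤ (n : ℝ) ^ (1 - s) / (1 - s) := by
  have h1s : 0 < 1 - s := by linarith
  induction n with
  | zero =>
    simp only [Icc_eq_empty_of_lt zero_lt_one, sum_empty]
    positivity
  | succ n ih =>
    have hstep := mul_rpow_sub_one_mul_sub_le_rpow_sub_rpow h1s.le (by linarith)
      (Nat.cast_nonneg n) (by linarith : (n : ℝ) ≤ n + 1)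
    rw [show 1 - s - 1 = -s by ring] at hstep
    rw [le_div_iff₀ h1s] at ih ⊢
    rw [sum_Icc_succ_top (by omega)]
    push_cast
    nlinarith

lemma sum_Icc_inv_sq_le_two (n : ℕ) : ∑ c ∈ Icc 1 n, ((c : ℝ) ^ 2)⁻¹ ≤ 2 := by
  calc ∑ c ∈ Icc 1 n, ((c : ℝ) ^ 2)⁻¹ ≤ ∑ c ∈ Ioo 0 (n + 1), ((c : ℝ) ^ 2)⁻¹ :=
        sum_le_sum_of_subset_of_nonneg (fun c hc => by simp at hc ⊢; omega)
          (fun _ _ _ => by positivity)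
    _ ≤ 2 := by simpa using sum_Ioo_inv_sq_le (α := ℝ) 0 (n + 1)

lemma rpow_inv_mul_one_add_le {c t s : ℝ} (hc : 1 ≤ c) (ht : -1 ≤ t) (hs0 : 0 ≤ s)
    (hs1 : s ≤ 1) :
    (c⁻¹ * (1 + t)) ^ s ≤ c ^ (-s) + s * |t| := by
  have hc0 : 0 < c := by linarith
  have hcs : c ^ (-s) ≤ 1 := rpow_le_one_of_one_le_of_nonpos hc (by linarith)
  have hcs0 : 0 ≤ c ^ (-s) := (rpow_pos_of_pos hc0 _).le
  have hcorr : c ^ (-s) * (s * t) ≤ s * |t| :=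
    calc c ^ (-s) * (s * t) ≤ c ^ (-s) * (s * |t|) :=
          mul_le_mul_of_nonneg_left (by nlinarith [le_abs_self t]) hcs0
      _ ≤ s * |t| := mul_le_of_le_one_left (by positivity) hcs
  calc (c⁻¹ * (1 + t)) ^ s = c ^ (-s) * (1 + t) ^ s := by
        rw [mul_rpow (by positivity) (by linarith), inv_rpow hc0.le, rpow_neg hc0.le]
    _ ≤ c ^ (-s) * (1 + s * t) :=
        mul_le_mul_of_nonneg_left (rpow_one_add_le_one_add_mul_self ht hs0 hs1) hcs0
    _ ≤ c ^ (-s) + s * |t| := by linarith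

lemma rpow_inv_add_div_cube_le {c θ s : ℝ} (hc : 1 ≤ c) (hθ : |θ| ≤ 2)
    (hpos : 0 < 1 / c + θ / c ^ 3) (hs0 : 0 ≤ s) (hs1 : s ≤ 1 / 2) :
    (1 / c + θ / c ^ 3) ^ s ≤ c ^ (-s) + (c ^ 2)⁻¹ := by
  have hc0 : 0 < c := by linarith
  have hform : 1 / c + θ / c ^ 3 = c⁻¹ * (1 + θ / c ^ 2) := by field_simp
  rw [hform] at hpos ⊢
  have ht : -1 ≤ θ / c ^ 2 := by linarith [pos_of_mul_pos_right hpos (by positivity)]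
  have hst : s * |θ / c ^ 2| ≤ (c ^ 2)⁻¹ :=
    calc s * |θ / c ^ 2| = s * |θ| * (c ^ 2)⁻¹ := by
          rw [abs_div, abs_of_pos (by positivity : 0 < c ^ 2)]; ring
      _ ≤ 1 * (c ^ 2)⁻¹ := by gcongr; nlinarith [abs_nonneg θ]
      _ = (c ^ 2)⁻¹ := one_mul _
  linarith [rpow_inv_mul_one_add_le hc ht hs0 (by linarith)]

lemma inv_one_sub_add_sq_div_six_le_exp {s : ℝ} (hs0 : 0 ≤ s) (hs1 : s ≤ 1 / 2) :
    (1 - s)⁻¹ + s ^ 2 / 6 ≤ exp (s + s ^ 2) := by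
  have hseries := sum_le_exp_of_nonneg (by positivity : 0 ≤ s + s ^ 2) 4
  norm_num [sum_range_succ, Nat.factorial] at hseries
  have h1s : 0 < 1 - s := by linarith
  have hpoly : (1 - s)⁻¹ + s ^ 2 / 6
      ≤ 1 + (s + s ^ 2) + (s + s ^ 2) ^ 2 / 2 + (s + s ^ 2) ^ 3 / 6 := by
    rw [inv_eq_one_div, div_add' _ _ _ h1s.ne', div_le_iff₀ h1s]
    nlinarith [pow_nonneg hs0 3, pow_nonneg hs0 4,
      mul_nonneg (pow_nonneg hs0 3) (sub_nonneg.2 hs1)]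
  linarith

lemma two_mul_exp_mul_le {s L : ℝ} (hs1 : s ≤ 1 / 2) (hL : log 2 ≤ L) :
    2 * exp (s * L) ≤ s ^ 2 * exp L / 6 + 3 * exp 10 * L := by
  have hlog2 : 2 / 3 < log 2 := by linarith [log_two_gt_d9]
  have hL0 : 0 ≤ L := by linarith
  by_cases hbig : 12 * exp (s * L) ≤ s ^ 2 * exp L
  · nlinarith [exp_pos 10]
  have hhalf : s ^ 2 * exp (L / 2) < 12 := by
    have hsplit : exp L = exp (s * L) * exp (L - s * L) := by rw [← exp_add]; ring_nf
    have hmono : exp (L / 2) ≤ exp (L - s * L) := exp_le_exp.2 (by nlinarith)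
    have : s ^ 2 * exp (L - s * L) < 12 := by
      by_contra! h
      exact hbig (by rw [hsplit]; nlinarith [exp_pos (s * L)])
    nlinarith [sq_nonneg s]
  -- `e ^ y ≥ y² / 2` turns `s² √N < 12` into a bound on `s log N`.
  have hquad : (L / 2) ^ 2 / 2 ≤ exp (L / 2) := by
    simpa using pow_div_factorial_le_exp (L / 2) (by positivity) 2
  have hsL : s * L ≤ 10 := by nlinarith [sq_nonneg s]
  have hexp : exp (s * L) ≤ exp 10 := exp_le_exp.2 hsL
  nlinarith [exp_pos 10, exp_pos L]

lemma two_div_le_rpow_neg_mul {x s : ℝ} (hx : 2 ≤ x) (hs1 : s ≤ 1 / 2) :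
    2 / x ≤ x ^ (-s) * (s ^ 2 / 6 + 3 * exp 10 * log x / x) := by
  have hx0 : 0 < x := by linarith
  have h := two_mul_exp_mul_le hs1 (log_le_log (by norm_num) hx)
  rw [exp_log hx0, mul_comm s, ← rpow_def_of_pos hx0] at h
  have hxs : x ^ (-s) * x ^ s = 1 := by rw [← rpow_add hx0]; simp
  rw [div_le_iff₀ hx0]
  calc 2 = x ^ (-s) * (2 * x ^ s) := by rw [mul_left_comm, hxs, mul_one]
    _ ≤ x ^ (-s) * (s ^ 2 * x / 6 + 3 * exp 10 * log x) := by gcongr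
    _ = x ^ (-s) * (s ^ 2 / 6 + 3 * exp 10 * log x / x) * x := by field_simp

lemma log_exp_add_le {a d : ℝ} (ha : 0 ≤ a) (hd : 0 ≤ d) : log (exp a + d) ≤ a + d := by
  rw [← log_exp (a + d)]
  apply log_le_log (by positivity)
  rw [exp_add]
  nlinarith [add_one_le_exp d, one_le_exp ha]

/-- For `N ≥ 2`, `0 < s ≤ 1/2` and `X = 1/c + θ(c)/c³` with `c` uniform on
`{1, …, N}`, `|θ| ≤ 2` and `X > 0`, one has
`log E[X^s] ≤ −s·log N + s + s² + C·(log N)/N` with an absolute constant `C`. -/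
theorem stmt_15 :
    ∃ C : ℝ, 0 < C ∧ ∀ N : ℕ, 2 ≤ N → ∀ s : ℝ, 0 < s → s ≤ 1 / 2 →
      ∀ θ : ℕ → ℝ, (∀ c, |θ c| ≤ 2) →
      (∀ c ∈ Finset.Icc 1 N, (0 : ℝ) < 1 / (c : ℝ) + θ c / (c : ℝ) ^ 3) →
      Real.log ((1 / (N : ℝ)) * ∑ c ∈ Finset.Icc 1 N,
          (1 / (c : ℝ) + θ c / (c : ℝ) ^ 3) ^ s)
        ≤ -s * Real.log N + s + s ^ 2 + C * Real.log N / N := by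
  refine ⟨3 * exp 10, by positivity, fun N hN s hs0 hs1 θ hθ hpos => ?_⟩
  have hN2 : (2 : ℝ) ≤ N := by exact_mod_cast hN
  have hN0 : (0 : ℝ) < N := by linarith
  set D := 3 * exp 10 * log N / N
  have hD : 0 ≤ D := div_nonneg (mul_nonneg (by positivity) (log_nonneg (by linarith))) hN0.le
  have hsum : ∑ c ∈ Icc 1 N, (1 / (c : ℝ) + θ c / (c : ℝ) ^ 3) ^ s
      ≤ (N : ℝ) ^ (1 - s) / (1 - s) + 2 :=
    calc _ ≤ ∑ c ∈ Icc 1 N, ((c : ℝ) ^ (-s) + ((c : ℝ) ^ 2)⁻¹) := sum_le_sum fun c hc =>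
          rpow_inv_add_div_cube_le (by exact_mod_cast (mem_Icc.1 hc).1) (hθ c) (hpos c hc)
            hs0.le hs1
      _ ≤ _ := by
          rw [sum_add_distrib]
          exact add_le_add (sum_Icc_rpow_neg_le hs0.le (by linarith) N) (sum_Icc_inv_sq_le_two N)
  have havg : (1 / (N : ℝ)) * ∑ c ∈ Icc 1 N, (1 / (c : ℝ) + θ c / (c : ℝ) ^ 3) ^ s
      ≤ (N : ℝ) ^ (-s) * (exp (s + s ^ 2) + D) :=
    calc _ ≤ (1 / (N : ℝ)) * ((N : ℝ) ^ (1 - s) / (1 - s) + 2) := by gcongr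
      _ = (N : ℝ) ^ (-s) * (1 - s)⁻¹ + 2 / N := by
          rw [sub_eq_add_neg, rpow_add hN0, rpow_one]; field_simp
      _ ≤ (N : ℝ) ^ (-s) * ((1 - s)⁻¹ + s ^ 2 / 6 + D) := by
          linarith [two_div_le_rpow_neg_mul hN2 hs1]
      _ ≤ (N : ℝ) ^ (-s) * (exp (s + s ^ 2) + D) := by
          gcongr; exact inv_one_sub_add_sq_div_six_le_exp hs0.le hs1
  have havg_pos : 0 < (1 / (N : ℝ)) * ∑ c ∈ Icc 1 N, (1 / (c : ℝ) + θ c / (c : ℝ) ^ 3) ^ s :=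
    mul_pos (by positivity) (sum_pos (fun c hc => rpow_pos_of_pos (hpos c hc) s)
      ⟨1, mem_Icc.2 ⟨le_rfl, by omega⟩⟩)
  calc _ ≤ log ((N : ℝ) ^ (-s) * (exp (s + s ^ 2) + D)) := log_le_log havg_pos havg
    _ = -s * log N + log (exp (s + s ^ 2) + D) := by
        rw [log_mul (rpow_pos_of_pos hN0 _).ne' (by positivity), log_rpow hN0]
    _ ≤ -s * log N + (s + s ^ 2 + D) := by
        gcongr; exact log_exp_add_le (by positivity) hD
    _ = _ := by ring
end
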